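/- arXiv:2506.19379 — 4 statements merged into one kernel-verified Lean document; each statement's English description precedes it below -/
import Mathlib

section
/- Let a, b < 2^w be naturals. Define c < 2^w by taking the bitwise OR of a and b at each bit position, but where, scanning from the most significant bit down, once a's bit differs from the OR result (i.e., a is 'disabled'), subsequent bits of a are ignored, and similarly for b; formally, c is produced by the greedy bit-serial OR procedure with link-disabling. Then c = max(a, b). -/
/-- One step of the bit-serial OR procedure with link-disabling, at bit `i`.
State: (alive flag of `a`, alive flag of `b`, accumulated output value). -/
def orStep (a b : ℕ) : Bool × Bool × ℕ → ℕ → Bool × Bool × ℕ :=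
  fun s i =>
    let aliveA := s.1
    let aliveB := s.2.1
    let acc := s.2.2
    let sb : Bool := (aliveA && a.testBit i) || (aliveB && b.testBit i)
    (aliveA && (a.testBit i == sb), aliveB && (b.testBit i == sb),
      acc + (if sb then 2 ^ i else 0))

/-- Output of the greedy bit-serial OR procedure with link-disabling,
scanning bits from the most significant (index `w-1`) down to `0`. -/
def bitSerialOrMax (w a b : ℕ) : ℕ :=
  (((List.range w).reverse).foldl (orStep a b) (true, true, 0)).2.2

lemma acc0 (m k : ℕ) (h : m % 2 = 0) : m / 2 * 2 ^ (k+1) = m * 2^k := by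
  conv_rhs => rw [← Nat.div_add_mod m 2]
  rw [h]; ring

lemma acc1 (m k : ℕ) (h : m % 2 = 1) : m / 2 * 2 ^ (k+1) + 2^k = m * 2^k := by
  conv_rhs => rw [← Nat.div_add_mod m 2]
  rw [h]; ring

lemma orStep_state (a b n : ℕ) :
    orStep a b (decide (b / 2^(n+1) ≤ a / 2^(n+1)), decide (a / 2^(n+1) ≤ b / 2^(n+1)),
      max (a / 2^(n+1)) (b / 2^(n+1)) * 2^(n+1)) n
    = (decide (b / 2^n ≤ a / 2^n), decide (a / 2^n ≤ b / 2^n),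
       max (a / 2^n) (b / 2^n) * 2^n) := by
  have hA : a / 2^(n+1) = a / 2^n / 2 := by rw [pow_succ, Nat.div_div_eq_div_mul]
  have hB : b / 2^(n+1) = b / 2^n / 2 := by rw [pow_succ, Nat.div_div_eq_div_mul]
  simp only [orStep, Nat.testBit_eq_decide_div_mod_eq, hA, hB]
  set A := a / 2^n with hAdef
  set B := b / 2^n with hBdef
  clear_value A B
  rcases Nat.lt_trichotomy (A/2) (B/2) with h|h|h
  · have h1 : ¬ (B/2 ≤ A/2) := by omega
    have h1' : A/2 ≤ B/2 := by omega
    have h2 : A ≤ B := by omega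
    have h3 : ¬ (B ≤ A) := by omega
    have hm : max A B = B := max_eq_right h2
    have hm2 : max (A/2) (B/2) = B/2 := max_eq_right h1'
    rcases Nat.mod_two_eq_zero_or_one B with hb2|hb2
    · simp [h1, h1', h2, h3, hm, hm2, hb2, acc0 B n hb2]
    · simp [h1, h1', h2, h3, hm, hm2, hb2, acc1 B n hb2]
  · have h1 : B/2 ≤ A/2 := by omega
    have h1' : A/2 ≤ B/2 := by omega
    have hm2 : max (A/2) (B/2) = A/2 := by omega
    rcases Nat.mod_two_eq_zero_or_one A with ha2|ha2 <;>
      rcases Nat.mod_two_eq_zero_or_one B with hb2|hb2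
    · have h2 : A ≤ B := by omega
      have h3 : B ≤ A := by omega
      have hm : max A B = A := by omega
      simp [h1, h1', h2, h3, hm, hm2, ha2, hb2, acc0 A n ha2]
    · have h2 : A ≤ B := by omega
      have h3 : ¬ (B ≤ A) := by omega
      have hm : max A B = B := by omega
      simp [h1, h1', h2, h3, hm, hm2, ha2, hb2]
      rw [show A/2 = B/2 from h, acc1 B n hb2]
    · have h2 : ¬ (A ≤ B) := by omega
      have h3 : B ≤ A := by omega
      have hm : max A B = A := by omega
      simp [h1, h1', h2, h3, hm, hm2, ha2, hb2, acc1 A n ha2]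
    · have h2 : A ≤ B := by omega
      have h3 : B ≤ A := by omega
      have hm : max A B = A := by omega
      simp [h1, h1', h2, h3, hm, hm2, ha2, hb2, acc1 A n ha2]
  · have h1 : B/2 ≤ A/2 := by omega
    have h1' : ¬ (A/2 ≤ B/2) := by omega
    have h2 : B ≤ A := by omega
    have h3 : ¬ (A ≤ B) := by omega
    have hm : max A B = A := max_eq_left h2
    have hm2 : max (A/2) (B/2) = A/2 := max_eq_left h1
    rcases Nat.mod_two_eq_zero_or_one A with ha2|ha2
    · simp [h1, h1', h2, h3, hm, hm2, ha2, acc0 A n ha2]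
    · simp [h1, h1', h2, h3, hm, hm2, ha2, acc1 A n ha2]

lemma foldl_state (a b : ℕ) : ∀ n : ℕ,
    ((List.range n).reverse).foldl (orStep a b)
      (decide (b / 2^n ≤ a / 2^n), decide (a / 2^n ≤ b / 2^n),
        max (a / 2^n) (b / 2^n) * 2^n)
    = (decide (b ≤ a), decide (a ≤ b), max a b) := by
  intro n
  induction n with
  | zero => simp
  | succ n ih =>
    rw [List.range_succ, List.reverse_append]
    simpa [orStep_state a b n] using ih

theorem bitSerialOrMax_eq_max (w a b : ℕ) (ha : a < 2 ^ w) (hb : b < 2 ^ w) :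
    bitSerialOrMax w a b = max a b := by
  have h := foldl_state a b w
  rw [Nat.div_eq_of_lt ha, Nat.div_eq_of_lt hb] at h
  norm_num at h
  rw [bitSerialOrMax, List.foldl_reverse, h]
end

section
/- Let a, b < 2^w be naturals. The bit-serial AND procedure with link-disabling (analogous to the OR-based max procedure but using AND) outputs exactly min(a, b). -/
/-- One step of the bit-serial AND procedure with link-disabling, at bit `i`:
`s` is the AND of the bits of all alive inputs. -/
def andStep (a b : ℕ) : Bool × Bool × ℕ → ℕ → Bool × Bool × ℕ :=
  fun s i =>
    let aliveA := s.1
    let aliveB := s.2.1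
    let acc := s.2.2
    let sb : Bool := (!aliveA || a.testBit i) && (!aliveB || b.testBit i)
    (aliveA && (a.testBit i == sb), aliveB && (b.testBit i == sb),
      acc + (if sb then 2 ^ i else 0))

/-- Output of the bit-serial AND procedure with link-disabling,
scanning bits from the most significant (index `w-1`) down to `0`. -/
def bitSerialAndMin (w a b : ℕ) : ℕ :=
  (((List.range w).reverse).foldl (andStep a b) (true, true, 0)).2.2

lemma div_succ_eq (x i : ℕ) : x / 2^(i+1) = x / 2^i / 2 := by
  rw [pow_succ, Nat.div_div_eq_div_mul]

lemma halfstep (x y i : ℕ) :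
    (decide (x/2^(i+1) = y/2^(i+1)) && (x.testBit i == y.testBit i)) = decide (x/2^i = y/2^i) := by
  rw [Nat.testBit_eq_decide_div_mod_eq, Nat.testBit_eq_decide_div_mod_eq, div_succ_eq, div_succ_eq]
  cases h1 : decide (x/2^i/2 = y/2^i/2) <;> cases h2 : decide (x/2^i % 2 = 1) <;>
    cases h3 : decide (y/2^i % 2 = 1) <;> simp_all <;> omega

lemma acc_eq (m i : ℕ) :
    2^(i+1) * (m/2^(i+1)) + (if m.testBit i then 2^i else 0) = 2^i * (m/2^i) := by
  rw [Nat.testBit_eq_decide_div_mod_eq, div_succ_eq, pow_succ]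
  generalize m / 2^i = q
  generalize (2:ℕ)^i = e
  by_cases h2 : q % 2 = 1
  · obtain ⟨k, hk⟩ : ∃ k, q = 2*k+1 := ⟨q/2, by omega⟩
    subst hk
    have h3 : (2*k+1)/2 = k := by omega
    rw [h3, if_pos (by simpa using h2)]
    ring
  · obtain ⟨k, hk⟩ : ∃ k, q = 2*k := ⟨q/2, by omega⟩
    subst hk
    have h3 : (2*k)/2 = k := by omega
    rw [h3, if_neg (by simpa using h2)]
    ring

lemma s_half (x y i : ℕ) (hxy : x ≤ y) :
    ((x.testBit i) && (!decide (y/2^(i+1) = x/2^(i+1)) || y.testBit i)) = x.testBit i := by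
  cases h : decide (y/2^(i+1) = x/2^(i+1))
  · simp
  · simp only [Bool.not_true, Bool.false_or]
    have he : y/2^(i+1) = x/2^(i+1) := of_decide_eq_true h
    have hd : x/2^i ≤ y/2^i := Nat.div_le_div_right hxy
    rw [div_succ_eq, div_succ_eq] at he
    rw [Nat.testBit_eq_decide_div_mod_eq, Nat.testBit_eq_decide_div_mod_eq]
    cases h2 : decide (x/2^i % 2 = 1) <;> cases h3 : decide (y/2^i % 2 = 1) <;>
      simp_all <;> omega

lemma s_eq (a b i : ℕ) :
    ((!decide (a/2^(i+1) = min a b/2^(i+1)) || a.testBit i)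
      && (!decide (b/2^(i+1) = min a b/2^(i+1)) || b.testBit i)) = (min a b).testBit i := by
  rcases le_total a b with hab | hab
  · have hm : min a b = a := min_eq_left hab
    rw [hm]
    have h1 : decide (a/2^(i+1) = a/2^(i+1)) = true := by simp
    rw [h1]
    simp only [Bool.not_true, Bool.false_or]
    exact s_half a b i hab
  · have hm : min a b = b := min_eq_right hab
    rw [hm]
    have h1 : decide (b/2^(i+1) = b/2^(i+1)) = true := by simp
    rw [h1]
    simp only [Bool.not_true, Bool.false_or]
    rw [Bool.and_comm]
    exact s_half b a i hab

lemma step_eq (a b i : ℕ) :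
    andStep a b (decide (a/2^(i+1) = min a b/2^(i+1)), decide (b/2^(i+1) = min a b/2^(i+1)),
      2^(i+1) * (min a b / 2^(i+1))) i
    = (decide (a/2^i = min a b/2^i), decide (b/2^i = min a b/2^i), 2^i * (min a b / 2^i)) := by
  simp only [andStep]
  rw [s_eq, halfstep, halfstep, acc_eq]

lemma fold_inv (a b : ℕ) : ∀ i, ((List.range i).reverse).foldl (andStep a b)
    (decide (a/2^i = min a b/2^i), decide (b/2^i = min a b/2^i), 2^i * (min a b/2^i))
    = (decide (a = min a b), decide (b = min a b), min a b)
  | 0 => by simp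
  | (i+1) => by
    rw [List.range_succ, List.reverse_append, List.reverse_singleton,
      List.singleton_append, List.foldl_cons, step_eq]
    exact fold_inv a b i

theorem bitSerialAndMin_eq_min (w a b : ℕ) (ha : a < 2 ^ w) (hb : b < 2 ^ w) :
    bitSerialAndMin w a b = min a b := by
  have hm : min a b < 2^w := lt_of_le_of_lt (min_le_left _ _) ha
  have h1 : a / 2^w = 0 := Nat.div_eq_of_lt ha
  have h2 : b / 2^w = 0 := Nat.div_eq_of_lt hb
  have h3 : min a b / 2^w = 0 := Nat.div_eq_of_lt hm
  have e : ((true, true, 0) : Bool × Bool × ℕ)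
      = (decide (a/2^w = min a b/2^w), decide (b/2^w = min a b/2^w),
        2^w * (min a b/2^w)) := by
    rw [h1, h2, h3]; simp
  rw [bitSerialAndMin, e, fold_inv]
end

section
/- Generalizing the bit-serial OR/disable procedure to a finite nonempty multiset of w-bit naturals: at each bit position from most significant to least, s is the OR of bits of all currently alive numbers, and a number is disabled when its bit differs from s; the resulting output equals the maximum of the multiset. -/
/-!
Let `M` be the maximum of `L`. Invariant: once the bits above `n` have been read, the alive
indices are exactly those `j` with `L[j] / 2 ^ n = M / 2 ^ n`, and the output so far is
`2 ^ n * (M / 2 ^ n)`. The invariant is preserved because among numbers sharing the prefix of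
`M` above bit `n`, bit `n` of `M` is their OR: it dominates each of them since `M` is largest,
and it is attained by `M` itself (for empty `L`, `M = 0` has no bit set). Initially the prefix
is `0` for all numbers (they are `< 2 ^ w`), and at `n = 0` the output is `M`.
-/

/-- One step of the bit-serial multiset max procedure at bit `i`.
State: (set of alive indices, accumulated output value).  `s` is the OR of
bit `i` of all alive numbers; indices whose bit differs from `s` are removed. -/
def listOrStep (L : List ℕ) : Finset (Fin L.length) × ℕ → ℕ → Finset (Fin L.length) × ℕ :=
  fun st i =>
    let A := st.1
    let s : Bool := decide (∃ j ∈ A, (L.get j).testBit i = true)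
    (A.filter (fun j => (L.get j).testBit i = s), st.2 + (if s then 2 ^ i else 0))

/-- Output of the bit-serial OR/disable procedure on a list of `w`-bit naturals,
scanning bits from index `w-1` down to `0`, all indices initially alive. -/
def listBitSerialMax (w : ℕ) (L : List ℕ) : ℕ :=
  (((List.range w).reverse).foldl (listOrStep L) (Finset.univ, 0)).2

namespace Nat

theorem div_two_pow_eq_two_mul_div_two_pow_succ_add (a n : ℕ) :
    a / 2 ^ n = 2 * (a / 2 ^ (n + 1)) + (a.testBit n).toNat := by
  rw [toNat_testBit, pow_succ, ← Nat.div_div_eq_div_mul]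
  omega

theorem div_two_pow_eq_div_two_pow_iff (a b n : ℕ) :
    a / 2 ^ n = b / 2 ^ n ↔
      a / 2 ^ (n + 1) = b / 2 ^ (n + 1) ∧ a.testBit n = b.testBit n := by
  rw [pow_succ, ← Nat.div_div_eq_div_mul, ← Nat.div_div_eq_div_mul, testBit_eq_decide_div_mod_eq,
    testBit_eq_decide_div_mod_eq, decide_eq_decide]
  omega

theorem testBit_of_le_of_div_two_pow_succ_eq {a b n : ℕ} (hab : a ≤ b)
    (hdiv : a / 2 ^ (n + 1) = b / 2 ^ (n + 1)) (ha : a.testBit n = true) :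
    b.testBit n = true := by
  have hmono : a / 2 ^ n ≤ b / 2 ^ n := Nat.div_le_div_right hab
  rw [div_two_pow_eq_two_mul_div_two_pow_succ_add a, div_two_pow_eq_two_mul_div_two_pow_succ_add b,
    hdiv, ha] at hmono
  cases hb : b.testBit n <;> simp_all

end Nat

theorem List.foldr_max_mem_cons {α : Type*} [LinearOrder α] (l : List α) (b : α) :
    l.foldr max b ∈ b :: l := by
  induction l with
  | nil => simp
  | cons a t ih =>
    rw [List.foldr_cons]
    rcases max_choice a (t.foldr max b) with h | h <;> rw [h]
    · simp
    · simp only [List.mem_cons] at ih ⊢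
      tauto

section BitSerial

variable (L : List ℕ) (M : ℕ)

def maxPrefixState (n : ℕ) : Finset (Fin L.length) × ℕ :=
  (Finset.univ.filter (fun j => L.get j / 2 ^ n = M / 2 ^ n), 2 ^ n * (M / 2 ^ n))

variable {L M}

theorem exists_mem_maxPrefixState_testBit_iff (hle : ∀ x ∈ L, x ≤ M) (hM : M = 0 ∨ M ∈ L)
    (n : ℕ) :
    (∃ j ∈ (maxPrefixState L M (n + 1)).1, (L.get j).testBit n = true) ↔ M.testBit n = true := by
  simp only [maxPrefixState, Finset.mem_filter, Finset.mem_univ, true_and]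
  constructor
  · rintro ⟨j, hdiv, hbit⟩
    exact Nat.testBit_of_le_of_div_two_pow_succ_eq (hle _ (L.get_mem j)) hdiv hbit
  · intro hbit
    have hMmem : M ∈ L := hM.resolve_left (by rintro rfl; simp at hbit)
    obtain ⟨j, hj⟩ := List.mem_iff_get.mp hMmem
    exact ⟨j, by rw [hj], by rw [hj, hbit]⟩

theorem listOrStep_maxPrefixState (hle : ∀ x ∈ L, x ≤ M) (hM : M = 0 ∨ M ∈ L) (n : ℕ) :
    listOrStep L (maxPrefixState L M (n + 1)) n = maxPrefixState L M n := by
  have hs := exists_mem_maxPrefixState_testBit_iff hle hM n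
  simp only [listOrStep, hs, Bool.decide_eq_true]
  simp only [maxPrefixState, Finset.filter_filter, Prod.mk.injEq]
  constructor
  · exact Finset.filter_congr fun j _ => (Nat.div_two_pow_eq_div_two_pow_iff _ M n).symm
  · rw [Nat.div_two_pow_eq_two_mul_div_two_pow_succ_add M n, pow_succ]
    cases M.testBit n <;>
      simp only [Bool.false_eq_true, ↓reduceIte, Bool.toNat_false, Bool.toNat_true] <;> ring

theorem foldl_listOrStep_maxPrefixState (hle : ∀ x ∈ L, x ≤ M) (hM : M = 0 ∨ M ∈ L) (n : ℕ) :
    (List.range n).reverse.foldl (listOrStep L) (maxPrefixState L M n) = maxPrefixState L M 0 := by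
  induction n with
  | zero => rfl
  | succ n ih =>
    rw [List.range_succ, List.reverse_append, List.reverse_singleton, List.singleton_append,
      List.foldl_cons, listOrStep_maxPrefixState hle hM, ih]

theorem maxPrefixState_of_lt {w : ℕ} (hw : ∀ x ∈ L, x < 2 ^ w) (hMw : M < 2 ^ w) :
    maxPrefixState L M w = (Finset.univ, 0) := by
  simp only [maxPrefixState, Nat.div_eq_of_lt hMw, mul_zero, Prod.mk.injEq, and_true]
  exact Finset.filter_true_of_mem fun j _ => Nat.div_eq_of_lt (hw _ (L.get_mem j))

end BitSerial

theorem listBitSerialMax_eq_max_general (w : ℕ) (L : List ℕ)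
    (hw : ∀ x ∈ L, x < 2 ^ w) :
    listBitSerialMax w L = L.foldr max 0 := by
  set M := L.foldr max 0
  have hM : M = 0 ∨ M ∈ L := List.mem_cons.mp (L.foldr_max_mem_cons 0)
  have hle : ∀ x ∈ L, x ≤ M := fun x hx => List.le_max_of_le hx le_rfl
  have hMw : M < 2 ^ w := hM.elim (fun h => h ▸ Nat.two_pow_pos w) (hw M)
  rw [listBitSerialMax, ← maxPrefixState_of_lt hw hMw, foldl_listOrStep_maxPrefixState hle hM]
  simp [maxPrefixState]

theorem listBitSerialMax_eq_max (w : ℕ) (L : List ℕ) (hne : L ≠ [])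
    (hw : ∀ x ∈ L, x < 2 ^ w) :
    listBitSerialMax w L = L.foldr max 0 :=
  listBitSerialMax_eq_max_general w L hw
end

section
/- In the bit-serial multiset max procedure, an index j stays alive through all w steps if and only if L[j] equals the maximum of the list L. -/
/-- The set of indices still alive after all `w` steps. -/
def finalAlive (w : ℕ) (L : List ℕ) : Finset (Fin L.length) :=
  (((List.range w).reverse).foldl (listOrStep L) (Finset.univ, 0)).1

/-!
Before bit `i` is processed, the alive indices are exactly those `j` with `L[j]` agreeing with the
maximum `M` in all bits above `i`. Among them `M` itself is present, and every other value is
`≤ M` with the same higher bits, so the OR of their bits at `i` is the bit of `M` at `i`;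
filtering by it extends the agreement to bit `i`. After bit `0`, agreement in all bits means
`L[j] = M`.
-/

namespace Nat

theorem div_two_pow_eq_two_mul_add_testBit (a i : ℕ) :
    a / 2 ^ i = 2 * (a / 2 ^ (i + 1)) + (a.testBit i).toNat := by
  rw [toNat_testBit, pow_succ, ← Nat.div_div_eq_div_mul, Nat.div_add_mod]

theorem div_two_pow_eq_iff (a b i : ℕ) :
    a / 2 ^ i = b / 2 ^ i ↔
      a / 2 ^ (i + 1) = b / 2 ^ (i + 1) ∧ a.testBit i = b.testBit i := by
  rw [div_two_pow_eq_two_mul_add_testBit a, div_two_pow_eq_two_mul_add_testBit b]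
  cases a.testBit i <;> cases b.testBit i <;> simp <;> omega

theorem testBit_eq_false_of_le_of_div_two_pow_eq {a b i : ℕ} (hab : a ≤ b)
    (hhigh : a / 2 ^ (i + 1) = b / 2 ^ (i + 1)) (hb : b.testBit i = false) :
    a.testBit i = false := by
  have hdiv : a / 2 ^ i ≤ b / 2 ^ i := Nat.div_le_div_right hab
  rw [div_two_pow_eq_two_mul_add_testBit a, div_two_pow_eq_two_mul_add_testBit b, hhigh, hb]
    at hdiv
  cases h : a.testBit i <;> simp_all

end Nat

def agreeingIndices (L : List ℕ) (M i : ℕ) : Finset (Fin L.length) :=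
  {j | L.get j / 2 ^ i = M / 2 ^ i}

section
variable {L : List ℕ} {M : ℕ}

theorem exists_mem_agreeingIndices_testBit_iff (hmem : M ∈ L) (hmax : ∀ x ∈ L, x ≤ M) (i : ℕ) :
    (∃ j ∈ agreeingIndices L M (i + 1), (L.get j).testBit i = true) ↔ M.testBit i = true := by
  simp only [agreeingIndices, Finset.mem_filter, Finset.mem_univ, true_and]
  constructor
  · rintro ⟨j, hhigh, hbit⟩
    by_contra hM
    rw [Nat.testBit_eq_false_of_le_of_div_two_pow_eq (hmax _ (L.get_mem j)) hhigh
      (Bool.eq_false_iff.mpr hM)] at hbit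
    exact Bool.false_ne_true hbit
  · intro hM
    obtain ⟨j, hj⟩ := List.mem_iff_get.mp hmem
    exact ⟨j, by rw [hj], by rw [hj, hM]⟩

theorem listOrStep_fst_eq_agreeingIndices (hmem : M ∈ L) (hmax : ∀ x ∈ L, x ≤ M) {i : ℕ}
    {st : Finset (Fin L.length) × ℕ} (hst : st.1 = agreeingIndices L M (i + 1)) :
    (listOrStep L st i).1 = agreeingIndices L M i := by
  have hor : decide (∃ j ∈ st.1, (L.get j).testBit i = true) = M.testBit i := by
    rw [hst, Bool.eq_iff_iff, decide_eq_true_iff]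
    exact exists_mem_agreeingIndices_testBit_iff hmem hmax i
  ext j
  simp only [listOrStep, hor]
  simp only [hst, agreeingIndices, Finset.mem_filter, Finset.mem_univ, true_and,
    Nat.div_two_pow_eq_iff (L.get j) M i]

theorem foldl_listOrStep_fst_eq_agreeingIndices (hmem : M ∈ L) (hmax : ∀ x ∈ L, x ≤ M)
    (i : ℕ) (st : Finset (Fin L.length) × ℕ) (hst : st.1 = agreeingIndices L M i) :
    ((List.range i).reverse.foldl (listOrStep L) st).1 = agreeingIndices L M 0 := by
  induction i generalizing st with
  | zero => simpa using hst
  | succ i ih =>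
    rw [List.range_succ, List.reverse_append, List.reverse_singleton, List.singleton_append,
      List.foldl_cons]
    exact ih _ (listOrStep_fst_eq_agreeingIndices hmem hmax hst)

end

theorem alive_iff_max_general (w : ℕ) (L : List ℕ)
    (hw : ∀ x ∈ L, x < 2 ^ w) (j : Fin L.length) :
    j ∈ finalAlive w L ↔ L.get j = L.foldr max 0 := by
  set M := L.foldr max 0
  have hmem : M ∈ L :=
    List.maximum_mem (List.foldr_max_of_ne_nil (List.ne_nil_of_length_pos j.pos)).symm
  have hmax : ∀ x ∈ L, x ≤ M := fun x hx => List.le_max_of_le' 0 hx le_rfl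
  have hstart : agreeingIndices L M w = Finset.univ := by
    ext k
    simpa [agreeingIndices, Nat.div_eq_of_lt (hw M hmem)] using hw _ (L.get_mem k)
  rw [finalAlive, foldl_listOrStep_fst_eq_agreeingIndices hmem hmax w _ hstart.symm]
  simp [agreeingIndices]

/-- An index stays alive through all `w` steps iff its element is the maximum. -/
theorem alive_iff_max (w : ℕ) (L : List ℕ) (hne : L ≠ [])
    (hw : ∀ x ∈ L, x < 2 ^ w) (j : Fin L.length) :
    j ∈ finalAlive w L ↔ L.get j = L.foldr max 0 :=
  alive_iff_max_general w L hw j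
end
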